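/- Under the hypotheses of the SGD descent lemma with constant learning rate η ∈ (0, 2/L̄) and exponentially increasing batch sizes b_t = δ^m b₀ on stages S_m (m = 0,…,M) with δ > 1, each stage of length between K_min·E_min ≥ 1 and K_max·E_max steps, the total number of steps T = ∑_{m=0}^M |S_m| satisfies min_{0≤t≤T−1} E‖∇f(θ_t)‖² ≤ (2(f(θ₀) − f̲*)/(2 − L̄η))·(1/(ηT)) + (L̄σ²/(2 − L̄η))·(δ η K_max E_max)/((δ−1) b₀ T). In particular min_{0≤t≤T−1} E‖∇f(θ_t)‖ = O(1/√T). -/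

import Mathlib

open MeasureTheory InnerProductSpace
set_option maxHeartbeats 2000000

lemma condexp_clm_comm {α E F : Type*} [NormedAddCommGroup E] [NormedSpace ℝ E] [CompleteSpace E]
    [NormedAddCommGroup F] [NormedSpace ℝ F] [CompleteSpace F]
    {m m0 : MeasurableSpace α} {μ : Measure α} (hm : m ≤ m0) [SigmaFinite (μ.trim hm)]
    (L : E →L[ℝ] F) {f : α → E} (hf : Integrable f μ) :
    (fun ω => L ((μ[f|m]) ω)) =ᵐ[μ] μ[fun ω => L (f ω)|m] := by
  refine ae_eq_condExp_of_forall_setIntegral_eq hm (L.integrable_comp hf) ?_ ?_ ?_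
  · intro s _ _
    exact (L.integrable_comp (integrable_condExp)).integrableOn
  · intro s hs hμs
    rw [ContinuousLinearMap.integral_comp_comm L integrable_condExp.integrableOn,
      ContinuousLinearMap.integral_comp_comm L hf.integrableOn,
      setIntegral_condExp hm hf hs]
  · exact L.continuous.comp_aestronglyMeasurable
      (StronglyMeasurable.aestronglyMeasurable stronglyMeasurable_condExp)

lemma coord_abs_le_norm {d : ℕ} (x : EuclideanSpace ℝ (Fin d)) (i : Fin d) : |x i| ≤ ‖x‖ := by
  have h := abs_real_inner_le_norm x (EuclideanSpace.single i (1:ℝ))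
  simpa [EuclideanSpace.inner_single_right, EuclideanSpace.norm_single] using h

lemma descent_lemma {d : ℕ} {f : EuclideanSpace ℝ (Fin d) → ℝ} {L : ℝ} (hL : 0 ≤ L)
    (hdiff : Differentiable ℝ f) (hlip : ∀ x y, ‖gradient f x - gradient f y‖ ≤ L * ‖x - y‖)
    (x y : EuclideanSpace ℝ (Fin d)) :
    |f y - f x - ⟪gradient f x, y - x⟫_ℝ| ≤ L / 2 * ‖y - x‖ ^ 2 := by
  set v := y - x with hv
  have hcont : Continuous (gradient f) := by
    have : LipschitzWith (Real.toNNReal L) (gradient f) := by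
      apply LipschitzWith.of_dist_le_mul
      intro a b
      rw [dist_eq_norm]
      exact (hlip a b).trans (by rw [Real.coe_toNNReal _ hL, dist_eq_norm])
    exact this.continuous
  have hderiv : ∀ s : ℝ, HasDerivAt (fun s : ℝ => f (x + s • v))
      ⟪gradient f (x + s • v), v⟫_ℝ s := by
    intro s
    have h1 : HasDerivAt (fun s : ℝ => x + s • v) v s := by
      simpa using ((hasDerivAt_id s).smul_const v).const_add x
    have h2 := ((hdiff (x + s • v)).hasGradientAt).hasFDerivAt
    have := h2.comp_hasDerivAt s h1
    simpa [InnerProductSpace.toDual, Function.comp_def] using this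
  have hcont2 : Continuous fun s : ℝ => ⟪gradient f (x + s • v), v⟫_ℝ := by
    exact (hcont.comp (by continuity)).inner continuous_const
  have hint : IntervalIntegrable (fun s : ℝ => ⟪gradient f (x + s • v), v⟫_ℝ) volume 0 1 :=
    hcont2.intervalIntegrable 0 1
  have hFTC : ∫ s in (0:ℝ)..1, ⟪gradient f (x + s • v), v⟫_ℝ = f y - f x := by
    rw [intervalIntegral.integral_eq_sub_of_hasDerivAt (fun s _ => hderiv s) hint]
    simp [hv]
  have hsplit : f y - f x - ⟪gradient f x, v⟫_ℝ
      = ∫ s in (0:ℝ)..1, (⟪gradient f (x + s • v), v⟫_ℝ - ⟪gradient f x, v⟫_ℝ) := by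
    rw [intervalIntegral.integral_sub hint (intervalIntegrable_const), hFTC]
    simp
  rw [hsplit]
  have habs : ∀ s ∈ Set.Icc (0:ℝ) 1,
      |⟪gradient f (x + s • v), v⟫_ℝ - ⟪gradient f x, v⟫_ℝ| ≤ L * s * ‖v‖ ^ 2 := by
    intro s hs
    rw [← inner_sub_left]
    calc |⟪gradient f (x + s • v) - gradient f x, v⟫_ℝ|
        ≤ ‖gradient f (x + s • v) - gradient f x‖ * ‖v‖ := abs_real_inner_le_norm _ _
      _ ≤ (L * ‖x + s • v - x‖) * ‖v‖ := by
          gcongr; exact hlip _ _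
      _ = L * s * ‖v‖ ^ 2 := by
          rw [add_sub_cancel_left, norm_smul, Real.norm_eq_abs, abs_of_nonneg hs.1]; ring
  have hint2 : IntervalIntegrable (fun s : ℝ => L * s * ‖v‖ ^ 2) volume 0 1 :=
    (Continuous.intervalIntegrable ((continuous_const.mul continuous_id).mul continuous_const) 0 1)
  calc |∫ s in (0:ℝ)..1, (⟪gradient f (x + s • v), v⟫_ℝ - ⟪gradient f x, v⟫_ℝ)|
      ≤ ∫ s in (0:ℝ)..1, |⟪gradient f (x + s • v), v⟫_ℝ - ⟪gradient f x, v⟫_ℝ| :=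
        intervalIntegral.abs_integral_le_integral_abs (by norm_num)
    _ ≤ ∫ s in (0:ℝ)..1, L * s * ‖v‖ ^ 2 := by
        apply intervalIntegral.integral_mono_on (by norm_num)
          ((hint.sub intervalIntegrable_const).abs) hint2 habs
    _ = L / 2 * ‖v‖ ^ 2 := by
        have : ∫ s in (0:ℝ)..1, L * s * ‖v‖ ^ 2 = (L * ‖v‖^2) * ∫ s in (0:ℝ)..1, s := by
          rw [← intervalIntegral.integral_const_mul]
          congr 1; ext s; ring
        rw [this, integral_id]; ring

theorem stmt_17 {Ω : Type*} {m0 : MeasurableSpace Ω} (μ : Measure Ω) [IsProbabilityMeasure μ]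
    {d : ℕ} (f : EuclideanSpace ℝ (Fin d) → ℝ) (Lb : NNReal) (hLb : 0 < (Lb : ℝ))
    (hdiff : Differentiable ℝ f) (hlip : LipschitzWith Lb (gradient f))
    (fstar : ℝ) (hbound : ∀ θ, fstar ≤ f θ)
    (ℱ : Filtration ℕ m0)
    (θ : ℕ → Ω → EuclideanSpace ℝ (Fin d)) (g : ℕ → Ω → EuclideanSpace ℝ (Fin d))
    (θ₀ : EuclideanSpace ℝ (Fin d)) (hθ0 : θ 0 = fun _ => θ₀)
    (η : ℝ) (hη0 : 0 < η) (hη2 : η < 2 / (Lb : ℝ))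
    -- exponentially increasing batch sizes on stages S_0, …, S_M
    (δ : ℝ) (hδ : 1 < δ) (b₀ : ℝ) (hb₀ : 0 < b₀)
    (M : ℕ) (S : ℕ → Finset ℕ) (Kmin Emin Kmax Emax : ℕ)
    (hKE : 1 ≤ Kmin * Emin)
    (hcard : ∀ m ∈ Finset.range (M + 1),
      Kmin * Emin ≤ (S m).card ∧ (S m).card ≤ Kmax * Emax)
    (hdisj : ∀ m ∈ Finset.range (M + 1), ∀ m' ∈ Finset.range (M + 1),
      m ≠ m' → Disjoint (S m) (S m'))
    (T : ℕ) (hT : (Finset.range (M + 1)).biUnion S = Finset.range T)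
    (b : ℕ → ℝ) (hbdef : ∀ m ∈ Finset.range (M + 1), ∀ t ∈ S m, b t = δ ^ m * b₀)
    (σ : ℝ)
    (hupdate : ∀ t ω, θ (t + 1) ω = θ t ω - η • g t ω)
    (hadapted : ∀ t, StronglyMeasurable[ℱ t] (θ t))
    (hgint : ∀ t, Integrable (g t) μ)
    (hvint : ∀ t, Integrable (fun ω => ‖g t ω - gradient f (θ t ω)‖ ^ 2) μ)
    (hunbiased : ∀ t, μ[g t | ℱ t] =ᵐ[μ] fun ω => gradient f (θ t ω))
    (hvar : ∀ t, ∀ᵐ ω ∂μ,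
      (μ[fun ω' => ‖g t ω' - gradient f (θ t ω')‖ ^ 2 | ℱ t]) ω ≤ σ ^ 2 / b t) :
    (⨅ t : Fin T, ∫ ω, ‖gradient f (θ t ω)‖ ^ 2 ∂μ)
        ≤ 2 * (f θ₀ - fstar) / (2 - Lb * η) * (1 / (η * T))
          + (Lb : ℝ) * σ ^ 2 / (2 - Lb * η)
            * (δ * η * (Kmax * Emax : ℝ) / ((δ - 1) * b₀ * T))
      ∧ (⨅ t : Fin T, ∫ ω, ‖gradient f (θ t ω)‖ ∂μ)
        ≤ Real.sqrt (2 * (f θ₀ - fstar) / ((2 - Lb * η) * η)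
            + (Lb : ℝ) * σ ^ 2 * δ * η * (Kmax * Emax : ℝ) / ((2 - Lb * η) * (δ - 1) * b₀))
          / Real.sqrt T := by
  classical
  set L : ℝ := (Lb : ℝ) with hLdef
  have hLη2 : L * η < 2 := by
    have := (lt_div_iff₀ hLb).mp hη2
    linarith
  have h2L : (0:ℝ) < 2 - L * η := by linarith
  have hδ1 : (0:ℝ) < δ - 1 := by linarith
  have hδ0 : (0:ℝ) < δ := by linarith
  have hlip' : ∀ x y, ‖gradient f x - gradient f y‖ ≤ L * ‖x - y‖ := fun x y => by
    simpa [dist_eq_norm] using hlip.dist_le_mul x y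
  set X : ℕ → Ω → EuclideanSpace ℝ (Fin d) := fun t ω => gradient f (θ t ω) with hX
  have hXsm : ∀ t, StronglyMeasurable[ℱ t] (X t) := fun t =>
    hlip.continuous.comp_stronglyMeasurable (hadapted t)
  have hXm : ∀ t, AEStronglyMeasurable (X t) μ := fun t =>
    ((hXsm t).mono (ℱ.le t)).aestronglyMeasurable
  -- integrability induction
  have hθm : ∀ t, AEStronglyMeasurable (θ t) μ := fun t =>
    ((hadapted t).mono (ℱ.le t)).aestronglyMeasurable
  have hdescent : ∀ x y : EuclideanSpace ℝ (Fin d),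
      |f y - f x - ⟪gradient f x, y - x⟫_ℝ| ≤ L / 2 * ‖y - x‖ ^ 2 :=
    descent_lemma (le_of_lt hLb) hdiff hlip'
  have hdiffpt : ∀ t ω, θ (t + 1) ω - θ t ω = -(η • g t ω) := by
    intro t ω; rw [hupdate t ω]; abel
  have hg2aux : ∀ t, Integrable (fun ω => ‖X t ω‖ ^ 2) μ → Integrable (fun ω => ‖g t ω‖ ^ 2) μ := by
    intro t hX2
    apply Integrable.mono' (((hvint t).const_mul 2).add (hX2.const_mul 2))
      ((hgint t).aestronglyMeasurable.norm.pow 2)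
    filter_upwards with ω
    have h1 : ‖g t ω‖ ≤ ‖g t ω - gradient f (θ t ω)‖ + ‖gradient f (θ t ω)‖ := by
      simpa using norm_add_le (g t ω - gradient f (θ t ω)) (gradient f (θ t ω))
    simp only [Real.norm_eq_abs, Pi.add_apply, Pi.pow_apply, Pi.mul_apply, hX]
    rw [abs_of_nonneg (pow_nonneg (norm_nonneg _) 2)]
    nlinarith [norm_nonneg (g t ω - gradient f (θ t ω)), norm_nonneg (gradient f (θ t ω)),
      norm_nonneg (g t ω),
      sq_nonneg (‖g t ω - gradient f (θ t ω)‖ - ‖gradient f (θ t ω)‖)]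
  have key : ∀ t, Integrable (fun ω => ‖X t ω‖ ^ 2) μ ∧ Integrable (fun ω => f (θ t ω)) μ := by
    intro t
    induction t with
    | zero =>
      constructor
      · simp only [hX, hθ0]; exact integrable_const _
      · simp only [hθ0]; exact integrable_const _
    | succ t ih =>
      obtain ⟨hX2, hf2⟩ := ih
      have hg2 := hg2aux t hX2
      have hXg : Integrable (fun ω => ‖X t ω‖ * ‖g t ω‖) μ := by
        apply Integrable.mono' (hX2.add hg2) ((hXm t).norm.mul (hgint t).aestronglyMeasurable.norm)
        filter_upwards with ω
        simp only [Real.norm_eq_abs, Pi.add_apply, Pi.pow_apply, Pi.mul_apply]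
        rw [abs_of_nonneg (mul_nonneg (norm_nonneg _) (norm_nonneg _))]
        nlinarith [norm_nonneg (X t ω), norm_nonneg (g t ω), sq_nonneg (‖X t ω‖ - ‖g t ω‖)]
      constructor
      · apply Integrable.mono' ((hX2.const_mul 2).add (hg2.const_mul (2 * L ^ 2 * η ^ 2)))
          ((hXm (t + 1)).norm.pow 2)
        filter_upwards with ω
        have h5 : ‖X (t + 1) ω - X t ω‖ ≤ L * (|η| * ‖g t ω‖) := by
          have := hlip' (θ (t + 1) ω) (θ t ω)
          simp only [hX]
          refine this.trans ?_
          rw [hdiffpt t ω, norm_neg, norm_smul, Real.norm_eq_abs]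
        have htri : ‖X (t + 1) ω‖ ≤ ‖X t ω‖ + ‖X (t + 1) ω - X t ω‖ := by
          simpa using norm_add_le (X t ω) (X (t + 1) ω - X t ω)
        simp only [Real.norm_eq_abs, Pi.add_apply, Pi.pow_apply, Pi.mul_apply]
        rw [abs_of_nonneg (pow_nonneg (norm_nonneg _) 2)]
        have hbd : ‖X (t + 1) ω‖ ≤ ‖X t ω‖ + L * (|η| * ‖g t ω‖) := htri.trans (by linarith)
        have hsq2 : ‖X (t + 1) ω‖ ^ 2 ≤ (‖X t ω‖ + L * (|η| * ‖g t ω‖)) ^ 2 :=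
          pow_le_pow_left₀ (norm_nonneg _) hbd 2
        have hb2 : (L * (|η| * ‖g t ω‖)) ^ 2 = L ^ 2 * η ^ 2 * ‖g t ω‖ ^ 2 := by
          rw [mul_pow, mul_pow, sq_abs]; ring
        nlinarith [hsq2, hb2, sq_nonneg (‖X t ω‖ - L * (|η| * ‖g t ω‖))]
      · apply Integrable.mono'
          (hf2.abs.add ((hXg.const_mul |η|).add (hg2.const_mul (L / 2 * η ^ 2))))
          (hdiff.continuous.comp_aestronglyMeasurable (hθm (t + 1)))
        filter_upwards with ω
        have hd := (abs_le.1 (hdescent (θ t ω) (θ (t + 1) ω)))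
        rw [hdiffpt t ω] at hd
        have hinner : |⟪gradient f (θ t ω), -(η • g t ω)⟫_ℝ| ≤ |η| * (‖X t ω‖ * ‖g t ω‖) := by
          rw [inner_neg_right, abs_neg, real_inner_smul_right, abs_mul]
          have := abs_real_inner_le_norm (gradient f (θ t ω)) (g t ω)
          simp only [hX]
          calc |η| * |⟪gradient f (θ t ω), g t ω⟫_ℝ|
              ≤ |η| * (‖gradient f (θ t ω)‖ * ‖g t ω‖) := by gcongr
            _ = |η| * (‖gradient f (θ t ω)‖ * ‖g t ω‖) := rfl
        have hnsq : ‖-(η • g t ω)‖ ^ 2 = η ^ 2 * ‖g t ω‖ ^ 2 := by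
          rw [norm_neg, norm_smul, Real.norm_eq_abs, mul_pow, sq_abs]
        rw [hnsq] at hd
        rw [Real.norm_eq_abs]
        simp only [Pi.add_apply]
        have h1 := hd.1
        have h2 := hd.2
        have h3 := abs_le.1 hinner
        rw [abs_le]
        constructor <;> linarith [le_abs_self (f (θ t ω)), neg_abs_le (f (θ t ω))]
  -- derived integrabilities
  have hg2 : ∀ t, Integrable (fun ω => ‖g t ω‖ ^ 2) μ := fun t => hg2aux t (key t).1
  have hXg : ∀ t, Integrable (fun ω => ‖X t ω‖ * ‖g t ω‖) μ := by
    intro t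
    apply Integrable.mono' ((key t).1.add (hg2 t))
      ((hXm t).norm.mul (hgint t).aestronglyMeasurable.norm)
    filter_upwards with ω
    simp only [Real.norm_eq_abs, Pi.add_apply, Pi.pow_apply, Pi.mul_apply]
    rw [abs_of_nonneg (mul_nonneg (norm_nonneg _) (norm_nonneg _))]
    nlinarith [norm_nonneg (X t ω), norm_nonneg (g t ω), sq_nonneg (‖X t ω‖ - ‖g t ω‖)]
  have hinner_int : ∀ t, Integrable (fun ω => ⟪X t ω, g t ω⟫_ℝ) μ := by
    intro t
    apply Integrable.mono' (hXg t) ((hXm t).inner (hgint t).aestronglyMeasurable)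
    filter_upwards with ω
    rw [Real.norm_eq_abs]
    exact abs_real_inner_le_norm _ _
  -- unbiasedness: ∫ ⟪X t, g t⟫ = ∫ ‖X t‖²
  have hXi2 : ∀ t i, Integrable (fun ω => X t ω i * X t ω i) μ := by
    intro t i
    apply Integrable.mono' (key t).1
      (((EuclideanSpace.proj (𝕜 := ℝ) i).continuous.comp_aestronglyMeasurable (hXm t)).mul
        ((EuclideanSpace.proj (𝕜 := ℝ) i).continuous.comp_aestronglyMeasurable (hXm t)))
    filter_upwards with ω
    simp only [Pi.mul_apply, PiLp.proj_apply, Real.norm_eq_abs, abs_mul]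
    calc |X t ω i| * |X t ω i| ≤ ‖X t ω‖ * ‖X t ω‖ := by
          exact mul_le_mul (coord_abs_le_norm _ _) (coord_abs_le_norm _ _) (abs_nonneg _)
            (norm_nonneg _)
      _ = ‖X t ω‖ ^ 2 := (sq ‖X t ω‖).symm
  have hXigi : ∀ t i, Integrable (fun ω => X t ω i * g t ω i) μ := by
    intro t i
    apply Integrable.mono' (hXg t)
      (((EuclideanSpace.proj (𝕜 := ℝ) i).continuous.comp_aestronglyMeasurable (hXm t)).mul
        ((EuclideanSpace.proj (𝕜 := ℝ) i).continuous.comp_aestronglyMeasurable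
          (hgint t).aestronglyMeasurable))
    filter_upwards with ω
    simp only [Pi.mul_apply, PiLp.proj_apply, Real.norm_eq_abs, abs_mul]
    exact mul_le_mul (coord_abs_le_norm _ _) (coord_abs_le_norm _ _) (abs_nonneg _) (norm_nonneg _)
  have hcross : ∀ t, ∫ ω, ⟪X t ω, g t ω⟫_ℝ ∂μ = ∫ ω, ‖X t ω‖ ^ 2 ∂μ := by
    intro t
    have hXi_meas : ∀ i, StronglyMeasurable[ℱ t] (fun ω => X t ω i) := fun i =>
      (EuclideanSpace.proj (𝕜 := ℝ) i).continuous.comp_stronglyMeasurable (hXsm t)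
    have hcoord : ∀ i, ∫ ω, X t ω i * g t ω i ∂μ = ∫ ω, X t ω i * X t ω i ∂μ := by
      intro i
      have hub : μ[fun ω => g t ω i|ℱ t] =ᵐ[μ] fun ω => X t ω i := by
        refine (condexp_clm_comm (ℱ.le t) (EuclideanSpace.proj (𝕜 := ℝ) i) (hgint t)).symm.trans ?_
        filter_upwards [hunbiased t] with ω hω
        simp only [PiLp.proj_apply]
        rw [hω]
      have hpull := condExp_mul_of_stronglyMeasurable_left (m := ℱ t) (μ := μ) (hXi_meas i)
        (show Integrable ((fun ω => X t ω i) * fun ω => g t ω i) μ from hXigi t i)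
        (show Integrable (fun ω => g t ω i) μ by
          have := (EuclideanSpace.proj (𝕜 := ℝ) i).integrable_comp (hgint t)
          simpa [PiLp.proj_apply] using this)
      calc ∫ ω, X t ω i * g t ω i ∂μ
          = ∫ ω, (μ[(fun ω => X t ω i) * fun ω => g t ω i|ℱ t]) ω ∂μ :=
            (integral_condExp (ℱ.le t)).symm
        _ = ∫ ω, X t ω i * X t ω i ∂μ := by
            refine integral_congr_ae (hpull.trans ?_)
            filter_upwards [hub] with ω hω
            simp only [Pi.mul_apply, hω]
    calc ∫ ω, ⟪X t ω, g t ω⟫_ℝ ∂μ = ∫ ω, ∑ i, X t ω i * g t ω i ∂μ := by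
          refine integral_congr_ae (Filter.Eventually.of_forall fun ω => ?_)
          simp [PiLp.inner_apply, RCLike.inner_apply, conj_trivial]
          exact Finset.sum_congr rfl fun i _ => mul_comm _ _
      _ = ∑ i, ∫ ω, X t ω i * g t ω i ∂μ := integral_finset_sum _ (fun i _ => hXigi t i)
      _ = ∑ i, ∫ ω, X t ω i * X t ω i ∂μ := Finset.sum_congr rfl (fun i _ => hcoord i)
      _ = ∫ ω, ∑ i, X t ω i * X t ω i ∂μ := (integral_finset_sum _ (fun i _ => hXi2 t i)).symm
      _ = ∫ ω, ‖X t ω‖ ^ 2 ∂μ := by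
          refine integral_congr_ae (Filter.Eventually.of_forall fun ω => ?_)
          show ∑ i, X t ω i * X t ω i = ‖X t ω‖ ^ 2
          rw [EuclideanSpace.norm_sq_eq]
          simp [Real.norm_eq_abs, sq_abs, sq]
  -- variance bound
  have hvarint : ∀ t, ∫ ω, ‖g t ω - X t ω‖ ^ 2 ∂μ ≤ σ ^ 2 / b t := by
    intro t
    calc ∫ ω, ‖g t ω - X t ω‖ ^ 2 ∂μ
        = ∫ ω, (μ[fun ω' => ‖g t ω' - gradient f (θ t ω')‖ ^ 2|ℱ t]) ω ∂μ :=
          (integral_condExp (ℱ.le t)).symm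
      _ ≤ ∫ _ω, σ ^ 2 / b t ∂μ :=
          integral_mono_ae integrable_condExp (integrable_const _) (hvar t)
      _ = σ ^ 2 / b t := by simp
  -- second moment
  have hvint' : ∀ t, Integrable (fun ω => ‖g t ω - X t ω‖ ^ 2) μ := hvint
  have hsecond : ∀ t, ∫ ω, ‖g t ω‖ ^ 2 ∂μ ≤ σ ^ 2 / b t + ∫ ω, ‖X t ω‖ ^ 2 ∂μ := by
    intro t
    have hA : Integrable (fun ω => ‖g t ω - X t ω‖ ^ 2) μ := hvint' t
    have hB : Integrable (fun ω => 2 * ⟪X t ω, g t ω⟫_ℝ - ‖X t ω‖ ^ 2) μ :=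
      ((hinner_int t).const_mul 2).sub (key t).1
    have hC : Integrable (fun ω => 2 * ⟪X t ω, g t ω⟫_ℝ) μ := (hinner_int t).const_mul 2
    have h3 : ∫ ω, ‖g t ω‖ ^ 2 ∂μ
        = (∫ ω, ‖g t ω - X t ω‖ ^ 2 ∂μ) + ∫ ω, (2 * ⟪X t ω, g t ω⟫_ℝ - ‖X t ω‖ ^ 2) ∂μ := by
      rw [← integral_add hA hB]
      refine integral_congr_ae (Filter.Eventually.of_forall fun ω => ?_)
      have h1 := norm_sub_sq_real (g t ω) (X t ω)
      have h2 := real_inner_comm (g t ω) (X t ω)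
      simp only
      linarith
    have h4 : ∫ ω, (2 * ⟪X t ω, g t ω⟫_ℝ - ‖X t ω‖ ^ 2) ∂μ
        = 2 * (∫ ω, ⟪X t ω, g t ω⟫_ℝ ∂μ) - ∫ ω, ‖X t ω‖ ^ 2 ∂μ := by
      rw [integral_sub hC (key t).1, MeasureTheory.integral_const_mul]
    rw [h3, h4, hcross t]
    linarith [hvarint t]
  set G : ℕ → ℝ := fun t => ∫ ω, ‖X t ω‖ ^ 2 ∂μ with hG
  set Fv : ℕ → ℝ := fun t => ∫ ω, f (θ t ω) ∂μ with hFvdef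
  -- one-step descent in expectation
  have hstep : ∀ t, η * G t - L * η ^ 2 / 2 * G t ≤ Fv t - Fv (t+1) + L * η ^ 2 / 2 * (σ ^ 2 / b t) := by
    intro t
    have hD : Integrable (fun ω => f (θ t ω) - η * ⟪X t ω, g t ω⟫_ℝ) μ :=
      (key t).2.sub ((hinner_int t).const_mul η)
    have h6 : Integrable (fun ω => L / 2 * (η ^ 2 * ‖g t ω‖ ^ 2)) μ := by
      refine ((hg2 t).const_mul (L / 2 * η ^ 2)).congr ?_
      refine Filter.Eventually.of_forall fun ω => ?_
      ring
    have hE : Integrable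
        (fun ω => f (θ t ω) - η * ⟪X t ω, g t ω⟫_ℝ + L / 2 * (η ^ 2 * ‖g t ω‖ ^ 2)) μ :=
      hD.add h6
    have hmono : Fv (t + 1)
        ≤ ∫ ω, (f (θ t ω) - η * ⟪X t ω, g t ω⟫_ℝ + L / 2 * (η ^ 2 * ‖g t ω‖ ^ 2)) ∂μ := by
      refine integral_mono (key (t + 1)).2 hE fun ω => ?_
      have hd := (abs_le.1 (hdescent (θ t ω) (θ (t + 1) ω))).2
      rw [hdiffpt t ω] at hd
      have hi : ⟪gradient f (θ t ω), -(η • g t ω)⟫_ℝ = -(η * ⟪X t ω, g t ω⟫_ℝ) := by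
        rw [inner_neg_right, real_inner_smul_right]
      have hnsq : ‖-(η • g t ω)‖ ^ 2 = η ^ 2 * ‖g t ω‖ ^ 2 := by
        rw [norm_neg, norm_smul, Real.norm_eq_abs, mul_pow, sq_abs]
      rw [hi, hnsq] at hd
      simp only
      linarith
    have hsplit : ∫ ω, (f (θ t ω) - η * ⟪X t ω, g t ω⟫_ℝ + L / 2 * (η ^ 2 * ‖g t ω‖ ^ 2)) ∂μ
        = Fv t - η * G t + L / 2 * η ^ 2 * (∫ ω, ‖g t ω‖ ^ 2 ∂μ) := by
      have h6 : Integrable (fun ω => L / 2 * (η ^ 2 * ‖g t ω‖ ^ 2)) μ := by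
        refine ((hg2 t).const_mul (L / 2 * η ^ 2)).congr ?_
        refine Filter.Eventually.of_forall fun ω => ?_
        ring
      rw [integral_add hD h6, integral_sub (key t).2 ((hinner_int t).const_mul η),
        MeasureTheory.integral_const_mul, MeasureTheory.integral_const_mul,
        MeasureTheory.integral_const_mul, hcross t]
      ring
    rw [hsplit] at hmono
    have h7 : L / 2 * η ^ 2 * (∫ ω, ‖g t ω‖ ^ 2 ∂μ)
        ≤ L / 2 * η ^ 2 * (σ ^ 2 / b t + G t) := by
      refine mul_le_mul_of_nonneg_left (hsecond t) ?_
      positivity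
    simp only [hG] at *
    linarith
  -- positivity of T
  have hTpos : 0 < T := by
    have h0 : 0 ∈ Finset.range (M + 1) := by simp
    have hS0 : (S 0).Nonempty := by
      rw [← Finset.card_pos]
      exact lt_of_lt_of_le hKE (hcard 0 h0).1
    obtain ⟨t0, ht0⟩ := hS0
    have : t0 ∈ Finset.range T := by
      rw [← hT]
      exact Finset.mem_biUnion.2 ⟨0, h0, ht0⟩
    exact lt_of_le_of_lt (Nat.zero_le _) (Finset.mem_range.1 this)
  -- sum of inverse batch sizes
  have hbsum : ∑ t ∈ Finset.range T, σ ^ 2 / b t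
      ≤ σ ^ 2 * ((Kmax * Emax : ℝ) * δ / (b₀ * (δ - 1))) := by
    have hpd : (↑(Finset.range (M + 1)) : Set ℕ).PairwiseDisjoint S := by
      intro m hm m' hm' hne
      exact hdisj m (Finset.mem_coe.1 hm) m' (Finset.mem_coe.1 hm') hne
    have hgeom : ∑ m ∈ Finset.range (M + 1), (δ⁻¹) ^ m ≤ δ / (δ - 1) := by
      have hr1 : δ⁻¹ < 1 := by
        rw [inv_lt_one_iff₀]; right; exact hδ
      have hr0 : 0 < δ⁻¹ := by positivity
      have hne1 : (0:ℝ) < 1 - δ⁻¹ := by linarith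
      rw [geom_sum_eq (by linarith : δ⁻¹ ≠ 1) (M + 1)]
      have h1 : (δ⁻¹ ^ (M + 1) - 1) / (δ⁻¹ - 1) = (1 - δ⁻¹ ^ (M + 1)) / (1 - δ⁻¹) := by
        rw [← neg_div_neg_eq]; ring_nf
      rw [h1]
      have h2 : (1 - δ⁻¹ ^ (M + 1)) / (1 - δ⁻¹) ≤ 1 / (1 - δ⁻¹) := by
        gcongr
        have : (0:ℝ) ≤ δ⁻¹ ^ (M + 1) := by positivity
        linarith
      refine h2.trans ?_
      have heq : (1:ℝ) / (1 - δ⁻¹) = δ / (δ - 1) := by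
        rw [div_eq_div_iff (by linarith) (by linarith)]
        field_simp
      rw [heq]
    calc ∑ t ∈ Finset.range T, σ ^ 2 / b t
        = ∑ m ∈ Finset.range (M + 1), ∑ t ∈ S m, σ ^ 2 / b t := by
          rw [← hT]; exact Finset.sum_biUnion hpd
      _ = ∑ m ∈ Finset.range (M + 1), ((S m).card : ℝ) * (σ ^ 2 / (δ ^ m * b₀)) := by
          refine Finset.sum_congr rfl fun m hm => ?_
          rw [Finset.sum_congr rfl (fun t ht => by rw [hbdef m hm t ht]), Finset.sum_const,
            nsmul_eq_mul]
      _ ≤ ∑ m ∈ Finset.range (M + 1), ((Kmax * Emax : ℝ)) * (σ ^ 2 / (δ ^ m * b₀)) := by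
          refine Finset.sum_le_sum fun m hm => ?_
          refine mul_le_mul_of_nonneg_right ?_ (by positivity)
          exact_mod_cast (hcard m hm).2
      _ = σ ^ 2 * (Kmax * Emax : ℝ) / b₀ * ∑ m ∈ Finset.range (M + 1), (δ⁻¹) ^ m := by
          rw [Finset.mul_sum]
          refine Finset.sum_congr rfl fun m hm => ?_
          rw [inv_pow]; ring
      _ ≤ σ ^ 2 * (Kmax * Emax : ℝ) / b₀ * (δ / (δ - 1)) := by
          refine mul_le_mul_of_nonneg_left hgeom (by positivity)
      _ = σ ^ 2 * ((Kmax * Emax : ℝ) * δ / (b₀ * (δ - 1))) := by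
          have hb0' : b₀ ≠ 0 := ne_of_gt hb₀
          have hδ1' : δ - 1 ≠ 0 := ne_of_gt hδ1
          field_simp
  -- summed bound
  have hsum : η * (2 - L * η) / 2 * ∑ t ∈ Finset.range T, G t
      ≤ (f θ₀ - fstar) + L * η ^ 2 / 2 * (σ ^ 2 * ((Kmax * Emax : ℝ) * δ / (b₀ * (δ - 1)))) := by
    have hs1 : ∑ t ∈ Finset.range T, (η * G t - L * η ^ 2 / 2 * G t)
        ≤ ∑ t ∈ Finset.range T, (Fv t - Fv (t + 1) + L * η ^ 2 / 2 * (σ ^ 2 / b t)) :=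
      Finset.sum_le_sum fun t _ => hstep t
    have hlhs : ∑ t ∈ Finset.range T, (η * G t - L * η ^ 2 / 2 * G t)
        = η * (2 - L * η) / 2 * ∑ t ∈ Finset.range T, G t := by
      rw [Finset.mul_sum]
      refine Finset.sum_congr rfl fun t _ => ?_
      ring
    have hrhs : ∑ t ∈ Finset.range T, (Fv t - Fv (t + 1) + L * η ^ 2 / 2 * (σ ^ 2 / b t))
        = (Fv 0 - Fv T) + L * η ^ 2 / 2 * ∑ t ∈ Finset.range T, σ ^ 2 / b t := by
      rw [Finset.sum_add_distrib, Finset.sum_range_sub' Fv T, ← Finset.mul_sum]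
    have hFv0 : Fv 0 = f θ₀ := by
      simp [hFvdef, hθ0]
    have hFvT : fstar ≤ Fv T := by
      have := integral_mono (integrable_const fstar) (key T).2 (fun ω => hbound (θ T ω))
      simpa [hFvdef] using this
    have hmul : L * η ^ 2 / 2 * ∑ t ∈ Finset.range T, σ ^ 2 / b t
        ≤ L * η ^ 2 / 2 * (σ ^ 2 * ((Kmax * Emax : ℝ) * δ / (b₀ * (δ - 1)))) :=
      mul_le_mul_of_nonneg_left hbsum (by positivity)
    rw [hlhs, hrhs] at hs1
    linarith
  have hGnonneg : ∀ t, 0 ≤ G t := fun t => integral_nonneg (fun ω => sq_nonneg _)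
  have hne : Nonempty (Fin T) := ⟨⟨0, hTpos⟩⟩
  have hbdd : BddBelow (Set.range fun t : Fin T => G t) :=
    ⟨0, by rintro _ ⟨t, rfl⟩; exact hGnonneg t⟩
  have hinf_avg : (⨅ t : Fin T, G t) * T ≤ ∑ t ∈ Finset.range T, G t := by
    have h := Finset.card_nsmul_le_sum (Finset.range T) G (⨅ t : Fin T, G t)
      (fun t ht => ciInf_le hbdd (⟨t, Finset.mem_range.1 ht⟩ : Fin T))
    rw [Finset.card_range, nsmul_eq_mul] at h
    linarith
  have hAnn : 0 ≤ f θ₀ - fstar := by linarith [hbound θ₀]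
  have hmain : (⨅ t : Fin T, G t)
      ≤ 2 * (f θ₀ - fstar) / (2 - L * η) * (1 / (η * T))
        + L * σ ^ 2 / (2 - L * η) * (δ * η * (Kmax * Emax : ℝ) / ((δ - 1) * b₀ * T)) := by
    have hTpos' : (0:ℝ) < T := by exact_mod_cast hTpos
    have hstep2 : (⨅ t : Fin T, G t)
        ≤ (f θ₀ - fstar + L * η ^ 2 / 2 * (σ ^ 2 * ((Kmax * Emax : ℝ) * δ / (b₀ * (δ - 1)))))
          / (η * (2 - L * η) / 2 * T) := by
      rw [le_div_iff₀ (by positivity)]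
      calc (⨅ t : Fin T, G t) * (η * (2 - L * η) / 2 * T)
          = η * (2 - L * η) / 2 * ((⨅ t : Fin T, G t) * T) := by ring
        _ ≤ η * (2 - L * η) / 2 * ∑ t ∈ Finset.range T, G t :=
            mul_le_mul_of_nonneg_left hinf_avg (by positivity)
        _ ≤ _ := hsum
    refine hstep2.trans_eq ?_
    have hb0' : b₀ ≠ 0 := ne_of_gt hb₀
    have hδ1' : δ - 1 ≠ 0 := ne_of_gt hδ1
    have hη' : η ≠ 0 := ne_of_gt hη0
    have h2L' : 2 - L * η ≠ 0 := ne_of_gt h2L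
    have hT' : (T:ℝ) ≠ 0 := ne_of_gt hTpos'
    field_simp
  have hTpos' : (0:ℝ) < T := by exact_mod_cast hTpos
  constructor
  · exact hmain
  · -- second part
    obtain ⟨t₀, ht₀⟩ := Finite.exists_min (fun t : Fin T => G t)
    have hGt0 : G ↑t₀
        ≤ 2 * (f θ₀ - fstar) / (2 - L * η) * (1 / (η * T))
          + L * σ ^ 2 / (2 - L * η) * (δ * η * (Kmax * Emax : ℝ) / ((δ - 1) * b₀ * T)) :=
      le_trans (le_ciInf ht₀) hmain
    have hY : MemLp (fun ω => ‖X ↑t₀ ω‖) 2 μ :=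
      (memLp_two_iff_integrable_sq (hXm ↑t₀).norm).2 (key ↑t₀).1
    have hvar0 := ProbabilityTheory.variance_nonneg (fun ω => ‖X ↑t₀ ω‖) μ
    rw [ProbabilityTheory.variance_eq_sub hY] at hvar0
    have hsqeq : ∫ ω, ((fun ω => ‖X ↑t₀ ω‖) ^ 2) ω ∂μ = G ↑t₀ := by
      refine integral_congr_ae (Filter.Eventually.of_forall fun ω => ?_)
      simp [Pi.pow_apply]
    rw [hsqeq] at hvar0
    have hnn : 0 ≤ ∫ ω, ‖X ↑t₀ ω‖ ∂μ := integral_nonneg fun ω => norm_nonneg _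
    have h2 : ∫ ω, ‖X ↑t₀ ω‖ ∂μ ≤ Real.sqrt (G ↑t₀) := by
      rw [← Real.sqrt_sq hnn]
      exact Real.sqrt_le_sqrt (by linarith)
    have hbdd2 : BddBelow (Set.range fun t : Fin T => ∫ ω, ‖X ↑t ω‖ ∂μ) :=
      ⟨0, by rintro _ ⟨t, rfl⟩; exact integral_nonneg fun ω => norm_nonneg _⟩
    have hinf2 : (⨅ t : Fin T, ∫ ω, ‖X ↑t ω‖ ∂μ) ≤ ∫ ω, ‖X ↑t₀ ω‖ ∂μ := ciInf_le hbdd2 t₀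
    have hInner : 0 ≤ 2 * (f θ₀ - fstar) / ((2 - L * η) * η)
        + L * σ ^ 2 * δ * η * (Kmax * Emax : ℝ) / ((2 - L * η) * (δ - 1) * b₀) := by
      have hA : 0 ≤ f θ₀ - fstar := hAnn
      have hL0 : (0:ℝ) ≤ L := le_of_lt hLb
      have h1 : (0:ℝ) ≤ 2 * (f θ₀ - fstar) / ((2 - L * η) * η) :=
        div_nonneg (by linarith) (by positivity)
      have h2' : (0:ℝ) ≤ L * σ ^ 2 * δ * η * (Kmax * Emax : ℝ) / ((2 - L * η) * (δ - 1) * b₀) := by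
        apply div_nonneg _ (by positivity)
        have hKEnn : (0:ℝ) ≤ (Kmax:ℝ) * (Emax:ℝ) := by positivity
        exact mul_nonneg (mul_nonneg (mul_nonneg (mul_nonneg hL0 (sq_nonneg σ))
          (le_of_lt hδ0)) (le_of_lt hη0)) hKEnn
      linarith
    have hRT : 2 * (f θ₀ - fstar) / (2 - L * η) * (1 / (η * T))
          + L * σ ^ 2 / (2 - L * η) * (δ * η * (Kmax * Emax : ℝ) / ((δ - 1) * b₀ * T))
        = (2 * (f θ₀ - fstar) / ((2 - L * η) * η)
            + L * σ ^ 2 * δ * η * (Kmax * Emax : ℝ) / ((2 - L * η) * (δ - 1) * b₀)) / T := by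
      have hb0' : b₀ ≠ 0 := ne_of_gt hb₀
      have hδ1' : δ - 1 ≠ 0 := ne_of_gt hδ1
      have hη' : η ≠ 0 := ne_of_gt hη0
      have h2L' : 2 - L * η ≠ 0 := ne_of_gt h2L
      have hT' : (T:ℝ) ≠ 0 := ne_of_gt hTpos'
      field_simp
    calc (⨅ t : Fin T, ∫ ω, ‖X ↑t ω‖ ∂μ)
        ≤ ∫ ω, ‖X ↑t₀ ω‖ ∂μ := hinf2
      _ ≤ Real.sqrt (G ↑t₀) := h2
      _ ≤ Real.sqrt ((2 * (f θ₀ - fstar) / ((2 - L * η) * η)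
            + L * σ ^ 2 * δ * η * (Kmax * Emax : ℝ) / ((2 - L * η) * (δ - 1) * b₀)) / T) := by
          refine Real.sqrt_le_sqrt ?_
          rw [← hRT]
          exact hGt0
      _ = Real.sqrt (2 * (f θ₀ - fstar) / ((2 - L * η) * η)
            + L * σ ^ 2 * δ * η * (Kmax * Emax : ℝ) / ((2 - L * η) * (δ - 1) * b₀))
          / Real.sqrt T := Real.sqrt_div hInner T
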